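/- Let l1, l2, l3 be integers, each at least 2. Then the symmetric sum over all six permutations σ of {1,2,3} satisfies Σ_{σ ∈ S3} ζ(l_{σ(1)}, l_{σ(2)}, l_{σ(3)}) = ζ(l1)ζ(l2)ζ(l3) − [ζ(l1+l2)ζ(l3) + ζ(l1+l3)ζ(l2) + ζ(l2+l3)ζ(l1)] + 2·ζ(l1+l2+l3). (Case n=3 of Corollary 1 of the paper, restricted to convergent indices; this is Hoffman's symmetric-sum theorem in depth 3.) -/

import Mathlib

open Classical in
/-- The multiple zeta value `ζ(l 0, l 1, …, l (n-1)) =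
∑_{m 0 > m 1 > ⋯ > m (n-1) ≥ 1} ∏ i, 1 / (m i) ^ (l i)`. -/
noncomputable def mzv {n : ℕ} (l : Fin n → ℕ) : ℝ :=
  ∑' m : Fin n → ℕ,
    if StrictAnti m ∧ ∀ i, 1 ≤ m i then ∏ i, (1 : ℝ) / (m i : ℝ) ^ (l i) else 0

/-!
Reindexing by `σ`, `ζ(l ∘ σ)` is the sum of `∏ i, 1 / m_i ^ l_i` over the tuples `m` for which
`m ∘ σ` is strictly decreasing. A tuple has exactly one strictly decreasing rearrangement if it is
injective and none otherwise, so the symmetric sum is the sum of `∏ i, 1 / m_i ^ l_i` over all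
injective `m`. For three indices, inclusion–exclusion over the coincidences `m₀ = m₁`, `m₀ = m₂`,
`m₁ = m₂` writes this as the unrestricted sum, minus the three partial diagonals, plus twice the
full diagonal. A sum over the tuples that are constant on the blocks of a partition factors into
single zeta values, the exponents within a block adding up.
-/

open Finset Function

section Sorting

variable {α : Type*} [LinearOrder α] {n : ℕ}

theorem existsUnique_strictAnti_comp_perm {f : Fin n → α} (hf : Injective f) :
    ∃! σ : Equiv.Perm (Fin n), StrictAnti (f ∘ σ) := by
  have hsort : Antitone (f ∘ Tuple.sort (OrderDual.toDual ∘ f)) :=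
    Tuple.monotone_sort (OrderDual.toDual ∘ f)
  refine ⟨_, hsort.strictAnti_of_injective (hf.comp (Equiv.injective _)), fun σ hσ => ?_⟩
  exact Equiv.ext fun i => hf (congrFun (Tuple.unique_antitone hσ.antitone hsort) i)

open Classical in
theorem sum_ite_strictAnti_comp_perm {M : Type*} [AddCommMonoid M] (f : Fin n → α) (x : M) :
    ∑ σ : Equiv.Perm (Fin n), (if StrictAnti (f ∘ σ) then x else 0) =
      if Injective f then x else 0 := by
  split_ifs with hf
  · obtain ⟨σ₀, hσ₀, huniq⟩ := existsUnique_strictAnti_comp_perm hf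
    have hiff : ∀ σ : Equiv.Perm (Fin n), StrictAnti (f ∘ σ) ↔ σ = σ₀ :=
      fun σ => ⟨huniq σ, fun h => h ▸ hσ₀⟩
    simp only [hiff, sum_ite_eq', mem_univ, if_true]
  · exact sum_eq_zero fun σ _ =>
      if_neg fun hσ => hf (hσ.injective.of_comp_right σ.surjective)

end Sorting

theorem range_comp_eq_setOf {ι κ α : Type*} {π : ι → κ} (hπ : Surjective π) :
    Set.range (fun m : κ → α => m ∘ π) = {m | ∀ i j, π i = π j → m i = m j} := by
  ext m
  constructor
  · rintro ⟨m', rfl⟩ i j h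
    simp [h]
  · exact fun h => ⟨m ∘ surjInv hπ, funext fun i => h _ _ (surjInv_eq hπ (π i))⟩

theorem hasSum_pi_prod {α : Type*} {n : ℕ} {f : Fin n → α → ℝ} {a : Fin n → ℝ}
    (hf₀ : ∀ i x, 0 ≤ f i x) (hf : ∀ i, HasSum (f i) (a i)) :
    HasSum (fun m : Fin n → α => ∏ i, f i (m i)) (∏ i, a i) := by
  induction n with
  | zero => simp
  | succ n ih =>
    have htail : HasSum (fun m : Fin n → α => ∏ i : Fin n, f i.succ (m i))
        (∏ i : Fin n, a i.succ) :=
      ih (fun i => hf₀ i.succ) fun i => hf i.succ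
    have hsummable :
        Summable fun x : α × (Fin n → α) => f 0 x.1 * ∏ i : Fin n, f i.succ (x.2 i) := by
      apply (hf 0).summable.mul_of_nonneg htail.summable
      · exact hf₀ 0
      · exact fun m => prod_nonneg fun _ _ => hf₀ _ _
    rw [Fin.prod_univ_succ, ← (Fin.consEquiv fun _ => α).hasSum_iff]
    convert (hf 0).mul htail hsummable using 1
    · rfl
    · funext x
      simp [Fin.consEquiv, Fin.prod_univ_succ]

noncomputable def mzvTerm {n : ℕ} (l m : Fin n → ℕ) : ℝ :=
  ∏ i, (1 : ℝ) / (m i : ℝ) ^ (l i)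

section MultipleZeta

variable {n k : ℕ}

theorem mzvTerm_eq_zero {l m : Fin n → ℕ} {i : Fin n} (hl : l i ≠ 0) (hm : m i = 0) :
    mzvTerm l m = 0 :=
  prod_eq_zero (mem_univ i) (by simp [hm, hl])

theorem mzvTerm_comp_perm (l m : Fin n → ℕ) (σ : Equiv.Perm (Fin n)) :
    mzvTerm (l ∘ σ) (m ∘ σ) = mzvTerm l m :=
  Equiv.prod_comp σ fun i => (1 : ℝ) / (m i : ℝ) ^ (l i)

theorem mzvTerm_comp (l : Fin n → ℕ) (π : Fin n → Fin k) (m : Fin k → ℕ) :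
    mzvTerm l (m ∘ π) = mzvTerm (fun j => ∑ i with π i = j, l i) m := by
  simp only [mzvTerm, comp_apply, one_div, ← inv_pow]
  rw [← prod_fiberwise univ π]
  refine prod_congr rfl fun j _ => ?_
  rw [← prod_pow_eq_pow_sum]
  exact prod_congr rfl fun i hi => by rw [(mem_filter.1 hi).2]

/-- The constraint `1 ≤ m i` in `mzv` can be dropped: a zero entry makes the term vanish, since
`1 / 0 ^ l i = 0` in Lean. -/
theorem mzv_eq_tsum_indicator {l : Fin n → ℕ} (hl : ∀ i, l i ≠ 0) :
    mzv l = ∑' m, {m : Fin n → ℕ | StrictAnti m}.indicator (mzvTerm l) m := by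
  refine tsum_congr fun m => ?_
  by_cases hm : ∀ i, 1 ≤ m i
  · simp [Set.indicator_apply, hm, mzvTerm]
  · obtain ⟨i, hi⟩ := not_forall.1 hm
    simp [Set.indicator_apply, hm, mzvTerm_eq_zero (hl i) (Nat.lt_one_iff.1 (not_le.1 hi))]

theorem mzv_comp_perm {l : Fin n → ℕ} (hl : ∀ i, l i ≠ 0) (σ : Equiv.Perm (Fin n)) :
    mzv (l ∘ σ) = ∑' m, {m : Fin n → ℕ | StrictAnti (m ∘ σ)}.indicator (mzvTerm l) m := by
  rw [mzv_eq_tsum_indicator (l := l ∘ σ) fun i => hl (σ i),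
    ← (σ.arrowCongr (Equiv.refl ℕ)).symm.tsum_eq]
  refine tsum_congr fun m => ?_
  change {m | StrictAnti m}.indicator (mzvTerm (l ∘ σ)) (m ∘ σ) = _
  simp only [Set.indicator_apply, Set.mem_ofPred_eq, mzvTerm_comp_perm]

theorem mzv_singleton {k : ℕ} (hk : k ≠ 0) : mzv ![k] = ∑' p : ℕ, 1 / (p : ℝ) ^ k := by
  rw [mzv_eq_tsum_indicator (by simpa using hk), ← (Equiv.funUnique (Fin 1) ℕ).symm.tsum_eq]
  refine tsum_congr fun p => ?_
  simp [Subsingleton.strictAnti, mzvTerm]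

theorem hasSum_mzvTerm {l : Fin n → ℕ} (hl : ∀ i, 2 ≤ l i) :
    HasSum (mzvTerm l) (∏ i, mzv ![l i]) :=
  hasSum_pi_prod (f := fun i (p : ℕ) => (1 : ℝ) / (p : ℝ) ^ l i) (fun _ _ => by positivity)
    fun i => by
      rw [mzv_singleton (by have := hl i; omega)]
      exact (Real.summable_one_div_nat_pow.2 (hl i)).hasSum

theorem hasSum_indicator_setOf_mzvTerm {l : Fin n → ℕ} (hl : ∀ i, 2 ≤ l i)
    {π : Fin n → Fin k} (hπ : Surjective π) :
    HasSum ({m | ∀ i j, π i = π j → m i = m j}.indicator (mzvTerm l))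
      (∏ j, mzv ![∑ i with π i = j, l i]) := by
  rw [← range_comp_eq_setOf hπ]
  refine hasSum_subtype_iff_indicator.1 (hπ.injective_comp_right.hasSum_range_iff.2 ?_)
  change HasSum (fun m => mzvTerm l (m ∘ π)) _
  simp only [mzvTerm_comp]
  refine hasSum_mzvTerm fun j => ?_
  obtain ⟨i, rfl⟩ := hπ j
  exact (hl i).trans (single_le_sum (fun _ _ => Nat.zero_le _) (mem_filter.2 ⟨mem_univ i, rfl⟩))

open Classical in
theorem sum_mzv_comp_perm {l : Fin n → ℕ} (hl : ∀ i, 2 ≤ l i) :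
    ∑ σ : Equiv.Perm (Fin n), mzv (l ∘ σ) =
      ∑' m, {m : Fin n → ℕ | Injective m}.indicator (mzvTerm l) m := by
  have hl₀ : ∀ i, l i ≠ 0 := fun i => by have := hl i; omega
  simp_rw [mzv_comp_perm hl₀]
  rw [← Summable.tsum_finsetSum fun σ _ => (hasSum_mzvTerm hl).summable.indicator _]
  refine tsum_congr fun m => ?_
  simp only [Set.indicator_apply, Set.mem_ofPred_eq]
  exact sum_ite_strictAnti_comp_perm m (mzvTerm l m)

end MultipleZeta

theorem indicator_injective_fin_three {α M : Type*} [AddCommGroup M] (g : (Fin 3 → α) → M) :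
    {m | Injective m}.indicator g =
      g - ({m | m 0 = m 1}.indicator g + {m | m 0 = m 2}.indicator g
          + {m | m 1 = m 2}.indicator g)
        + 2 • {m | m 0 = m 1 ∧ m 1 = m 2}.indicator g := by
  classical
  ext m
  have hinj : Injective m ↔ m 0 ≠ m 1 ∧ m 0 ≠ m 2 ∧ m 1 ≠ m 2 := by
    refine ⟨fun h => ⟨h.ne (by decide), h.ne (by decide), h.ne (by decide)⟩, ?_⟩
    rintro ⟨h01, h02, h12⟩ i j hij
    fin_cases i <;> fin_cases j <;> simp_all [eq_comm]
  simp only [Set.indicator_apply, Set.mem_ofPred_eq, hinj, Pi.add_apply, Pi.sub_apply,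
    Pi.smul_apply]
  by_cases h01 : m 0 = m 1 <;> by_cases h02 : m 0 = m 2 <;> by_cases h12 : m 1 = m 2 <;>
    simp_all [two_nsmul]

theorem hasSum_indicator_injective_mzvTerm_fin_three {l : Fin 3 → ℕ} (hl : ∀ i, 2 ≤ l i) :
    HasSum ({m | Injective m}.indicator (mzvTerm l))
      (mzv ![l 0] * mzv ![l 1] * mzv ![l 2]
        - (mzv ![l 0 + l 1] * mzv ![l 2] + mzv ![l 0 + l 2] * mzv ![l 1]
            + mzv ![l 0] * mzv ![l 1 + l 2])
        + 2 • mzv ![l 0 + l 1 + l 2]) := by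
  have hall : HasSum (mzvTerm l) (mzv ![l 0] * mzv ![l 1] * mzv ![l 2]) := by
    simpa [Fin.prod_univ_three] using hasSum_mzvTerm hl
  have h01 : HasSum ({m | m 0 = m 1}.indicator (mzvTerm l)) (mzv ![l 0 + l 1] * mzv ![l 2]) := by
    convert hasSum_indicator_setOf_mzvTerm hl (π := (![0, 0, 1] : Fin 3 → Fin 2)) (by decide)
      using 2
    · ext m
      simp [Fin.forall_fin_succ]
      grind
    · simp [sum_filter, Fin.sum_univ_succ]
  have h02 : HasSum ({m | m 0 = m 2}.indicator (mzvTerm l)) (mzv ![l 0 + l 2] * mzv ![l 1]) := by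
    convert hasSum_indicator_setOf_mzvTerm hl (π := (![0, 1, 0] : Fin 3 → Fin 2)) (by decide)
      using 2
    · ext m
      simp [Fin.forall_fin_succ]
      grind
    · simp [sum_filter, Fin.sum_univ_succ]
  have h12 : HasSum ({m | m 1 = m 2}.indicator (mzvTerm l)) (mzv ![l 0] * mzv ![l 1 + l 2]) := by
    convert hasSum_indicator_setOf_mzvTerm hl (π := (![0, 1, 1] : Fin 3 → Fin 2)) (by decide)
      using 2
    · ext m
      simp [Fin.forall_fin_succ]
      grind
    · simp [sum_filter, Fin.sum_univ_succ]
  have hdiag : HasSum ({m | m 0 = m 1 ∧ m 1 = m 2}.indicator (mzvTerm l))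
      (mzv ![l 0 + l 1 + l 2]) := by
    convert hasSum_indicator_setOf_mzvTerm hl (π := fun _ => (0 : Fin 1)) (by decide) using 2
    · ext m
      simp [Fin.forall_fin_succ]
      grind
    · simp [Fin.sum_univ_succ, add_assoc]
  rw [indicator_injective_fin_three]
  exact (hall.sub ((h01.add h02).add h12)).add (hdiag.nsmul 2)

theorem hoffman_symmetric_sum_depth_three (l1 l2 l3 : ℕ)
    (h1 : 2 ≤ l1) (h2 : 2 ≤ l2) (h3 : 2 ≤ l3) :
    ∑ σ : Equiv.Perm (Fin 3), mzv (![l1, l2, l3] ∘ σ) =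
      mzv ![l1] * mzv ![l2] * mzv ![l3]
        - (mzv ![l1 + l2] * mzv ![l3] + mzv ![l1 + l3] * mzv ![l2]
            + mzv ![l2 + l3] * mzv ![l1])
        + 2 * mzv ![l1 + l2 + l3] := by
  have hl : ∀ i : Fin 3, 2 ≤ ![l1, l2, l3] i := by
    simp [Fin.forall_fin_succ, h1, h2, h3]
  rw [sum_mzv_comp_perm hl, (hasSum_indicator_injective_mzvTerm_fin_three hl).tsum_eq]
  simp only [Matrix.cons_val_zero, Matrix.cons_val_one, Matrix.cons_val_two, Matrix.tail_cons,
    Matrix.head_cons, nsmul_eq_mul, Nat.cast_ofNat]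
  ring
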